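/- Let (x^k)_{k ≥ −1} be a cDCA sequence with x⁰ ∈ dom g. Then for every k ≥ 0, E(x^{k+1}, x^k) + (λ/2 − τ)‖x^k − x^{k+1}‖² ≤ E(x^k, x^{k−1}); in particular, since τ = L_f²δ²/(8λ) < λ/2, the sequence (E(x^k, x^{k−1}))_{k ≥ 0} is nonincreasing. -/

import Mathlib

/-!
The prox step makes `(w - x^{k+1})/μ` a subgradient of `g` at `x^{k+1}`, where `w` is the prox
argument, and with `μ = 2/(2λ + L_f)` this subgradient equals `ηᵏ - ∇f(yᵏ) - λ q` for
`q = (x^{k+1} - xᵏ) - (L_f/2λ)(yᵏ - x^{k+1})`. The smooth part is controlled by a three-point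
inequality for convex functions with `L`-Lipschitz gradient,
`f p ≤ f u + ⟪∇f y, p - u⟫ + (L/4s) ‖(p - u) - s (y - p)‖²` for every `s > 0`,
obtained by averaging the interpolation inequalities along `p → u` and `p → y → u` with weights
`1 : s` and then maximizing out the gradient differences. With `s = L_f/2λ` the inner products
cancel against the subgradient inequalities of `g` and `h`, leaving
`F(x^{k+1}) + (λ/2)‖xᵏ - x^{k+1}‖² ≤ F(xᵏ) + (L_f²/8λ)‖yᵏ - x^{k+1}‖²`, and the inexactness
bound `‖x^{k+1} - yᵏ‖ ≤ δ‖x^{k-1} - xᵏ‖` turns the last term into `τ‖x^{k-1} - xᵏ‖²`.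
-/

open Set Filter Topology
open scoped InnerProductSpace

noncomputable section

abbrev Euc (n : ℕ) := EuclideanSpace ℝ (Fin n)

/-- The subdifferential of a real-valued function `h` at `u`. -/
def SubdiffR {n : ℕ} (h : Euc n → ℝ) (u : Euc n) : Set (Euc n) :=
  {ξ | ∀ z, h u + ⟪ξ, z - u⟫_ℝ ≤ h z}

/-- Convexity for extended-real-valued functions. -/
def ConvexEReal {n : ℕ} (g : Euc n → EReal) : Prop :=
  ∀ x y : Euc n, ∀ a b : ℝ, 0 ≤ a → 0 ≤ b → a + b = 1 →
    g (a • x + b • y) ≤ (a : EReal) * g x + (b : EReal) * g y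

/-- `g` is proper: nowhere `⊥` and somewhere finite. -/
def ProperE {n : ℕ} (g : Euc n → EReal) : Prop :=
  (∀ x, g x ≠ ⊥) ∧ ∃ x, g x ≠ ⊤

/-- `P` is the proximal mapping of `g`: for every `α > 0` and every `x`, `P α x` is
the unique minimizer over `ℝⁿ` of `y ↦ g y + (1/(2α)) ‖x - y‖²`. -/
def IsProx {n : ℕ} (g : Euc n → EReal) (P : ℝ → Euc n → Euc n) : Prop :=
  ∀ α : ℝ, 0 < α → ∀ x p, P α x = p ↔
    (∀ y, g p + ((1/(2*α) * ‖x - p‖^2 : ℝ) : EReal) ≤ g y + ((1/(2*α) * ‖x - y‖^2 : ℝ) : EReal))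

/-- A cDCA sequence, indexed so that `x 0 = x⁻¹` and `x (k+1) = xᵏ` for `k ≥ 0`:
for every `k ≥ 0` there exist `ηᵏ ∈ ∂h(xᵏ)` and `yᵏ` with
`x^{k+1} = Prox_{μg}((1-μλ)yᵏ - μ∇f(yᵏ) + μλxᵏ + μηᵏ)` and
`‖x^{k+1} - yᵏ‖ ≤ δ‖x^{k-1} - xᵏ‖`. -/
def IsCDCA {n : ℕ} (f' : Euc n → Euc n) (h : Euc n → ℝ) (P : ℝ → Euc n → Euc n)
    (lam mu δ : ℝ) (x : ℕ → Euc n) : Prop :=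
  ∀ k : ℕ, ∃ η ∈ SubdiffR h (x (k+1)), ∃ y,
    x (k+2) = P mu ((1 - mu*lam) • y - mu • f' y + (mu*lam) • x (k+1) + mu • η) ∧
    ‖x (k+2) - y‖ ≤ δ * ‖x k - x (k+1)‖

section SmoothConvex

variable {E : Type*} [NormedAddCommGroup E] [InnerProductSpace ℝ E]

lemma ConvexOn.comp_add_smul {f : E → ℝ} (hconv : ConvexOn ℝ univ f) (z v : E) :
    ConvexOn ℝ univ (fun s : ℝ => f (z + s • v)) := by
  refine ⟨convex_univ, fun a _ b _ α β hα hβ hαβ => ?_⟩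
  obtain rfl : β = 1 - α := by linarith
  convert hconv.2 (mem_univ (z + a • v)) (mem_univ (z + b • v)) hα hβ hαβ using 2
  module

lemma mul_mul_norm_sub_sq_le {α γ : ℝ} (h : α + γ = 1) (x y : E) :
    α * γ * ‖x - y‖ ^ 2 ≤ α * ‖x‖ ^ 2 + γ * ‖y‖ ^ 2 := by
  obtain rfl : γ = 1 - α := by linarith
  have := sq_nonneg ‖α • x + (1 - α) • y‖
  rw [norm_add_sq_real, norm_smul, norm_smul, real_inner_smul_left, real_inner_smul_right,
    mul_pow, mul_pow, Real.norm_eq_abs, Real.norm_eq_abs, sq_abs, sq_abs] at this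
  rw [norm_sub_sq_real]
  linear_combination this

lemma real_inner_le_mul_norm_sq_add {κ : ℝ} (hκ : 0 < κ) (x y : E) :
    ⟪x, y⟫_ℝ ≤ κ / 2 * ‖x‖ ^ 2 + 1 / (2 * κ) * ‖y‖ ^ 2 := by
  have key : κ / 2 * ‖x‖ ^ 2 + 1 / (2 * κ) * ‖y‖ ^ 2 - ⟪x, y⟫_ℝ = ‖κ • x - y‖ ^ 2 / (2 * κ) := by
    rw [norm_sub_sq_real, norm_smul, real_inner_smul_left, mul_pow, Real.norm_of_nonneg hκ.le]
    field_simp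
    ring
  linarith [div_nonneg (sq_nonneg ‖κ • x - y‖) (by positivity : (0 : ℝ) ≤ 2 * κ)]

variable [CompleteSpace E] {f : E → ℝ} {f' : E → E} {L : ℝ}

lemma HasGradientAt.hasDerivAt_comp_add_smul {g z v : E} {t : ℝ}
    (hf : HasGradientAt f g (z + t • v)) :
    HasDerivAt (fun s : ℝ => f (z + s • v)) ⟪g, v⟫_ℝ t := by
  have hline : HasDerivAt (fun s : ℝ => z + s • v) v t := by
    simpa using ((hasDerivAt_id t).smul_const v).const_add z
  have := hf.hasFDerivAt.comp_hasDerivAt t hline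
  simp only [InnerProductSpace.toDual_apply_apply] at this
  exact this

lemma ConvexOn.add_inner_le_of_hasGradientAt (hconv : ConvexOn ℝ univ f) {g z : E}
    (hf : HasGradientAt f g z) (w : E) : f z + ⟪g, w - z⟫_ℝ ≤ f w := by
  have := (hconv.comp_add_smul z (w - z)).le_slope_of_hasDerivAt (mem_univ 0) (mem_univ 1)
    zero_lt_one (HasGradientAt.hasDerivAt_comp_add_smul (t := 0) (by simpa using hf))
  simp only [slope_def_field, one_smul, add_sub_cancel, zero_smul, add_zero, sub_zero, div_one]
    at this
  linarith

lemma le_add_inner_add_of_lipschitz_gradient (hf : ∀ z, HasGradientAt f (f' z) z)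
    (hlip : ∀ z w, ‖f' z - f' w‖ ≤ L * ‖z - w‖) (z w : E) :
    f w ≤ f z + ⟪f' z, w - z⟫_ℝ + L / 2 * ‖w - z‖ ^ 2 := by
  set v := w - z
  set φ : ℝ → ℝ := fun t => f (z + t • v) - t * ⟪f' z, v⟫_ℝ - L / 2 * t ^ 2 * ‖v‖ ^ 2
  have hφ : ∀ t, HasDerivAt φ (⟪f' (z + t • v) - f' z, v⟫_ℝ - L * t * ‖v‖ ^ 2) t := by
    intro t
    have := (((hf (z + t • v)).hasDerivAt_comp_add_smul).sub ((hasDerivAt_id t).mul_const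
      ⟪f' z, v⟫_ℝ)).sub (((hasDerivAt_pow 2 t).const_mul (L / 2)).mul_const (‖v‖ ^ 2))
    refine this.congr_deriv ?_
    rw [inner_sub_left]; ring
  have hanti : AntitoneOn φ (Icc 0 1) := by
    refine antitoneOn_of_hasDerivWithinAt_nonpos (convex_Icc 0 1)
      (HasDerivAt.continuousOn fun t _ => hφ t) (fun t _ => (hφ t).hasDerivWithinAt) ?_
    intro t ht
    rw [interior_Icc] at ht
    calc ⟪f' (z + t • v) - f' z, v⟫_ℝ - L * t * ‖v‖ ^ 2
        ≤ ‖f' (z + t • v) - f' z‖ * ‖v‖ - L * t * ‖v‖ ^ 2 := by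
          gcongr; exact real_inner_le_norm _ _
      _ ≤ L * (t * ‖v‖) * ‖v‖ - L * t * ‖v‖ ^ 2 := by
          gcongr
          simpa [norm_smul, abs_of_pos ht.1] using hlip (z + t • v) z
      _ = 0 := by ring
  have h01 : φ 1 ≤ φ 0 :=
    hanti (left_mem_Icc.2 zero_le_one) (right_mem_Icc.2 zero_le_one) zero_le_one
  simp only [φ, v, one_smul, add_sub_cancel, zero_smul, add_zero, one_mul, one_pow, mul_one,
    zero_mul, sub_zero] at h01
  linarith

lemma ConvexOn.add_inner_add_norm_sq_gradient_le (hL : 0 < L) (hconv : ConvexOn ℝ univ f)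
    (hf : ∀ z, HasGradientAt f (f' z) z) (hlip : ∀ z w, ‖f' z - f' w‖ ≤ L * ‖z - w‖)
    (z w : E) : f z + ⟪f' z, w - z⟫_ℝ + 1 / (2 * L) * ‖f' w - f' z‖ ^ 2 ≤ f w := by
  set Δ := f' w - f' z
  set m := w - L⁻¹ • Δ
  have hz := hconv.add_inner_le_of_hasGradientAt (hf z) m
  have hw := le_add_inner_add_of_lipschitz_gradient hf hlip w m
  have hmz : ⟪f' z, m - z⟫_ℝ = ⟪f' z, w - z⟫_ℝ - L⁻¹ * ⟪f' z, Δ⟫_ℝ := by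
    rw [sub_right_comm, inner_sub_right, real_inner_smul_right]
  have hmw : m - w = -(L⁻¹ • Δ) := by simp [m]
  have hΔ : ⟪f' w, Δ⟫_ℝ - ⟪f' z, Δ⟫_ℝ = ‖Δ‖ ^ 2 := by
    rw [← inner_sub_left, real_inner_self_eq_norm_sq]
  have hL' : L / 2 * L⁻¹ ^ 2 = L⁻¹ / 2 := by field_simp
  rw [hmz] at hz
  rw [hmw, inner_neg_right, real_inner_smul_right, norm_neg, norm_smul, mul_pow, norm_inv,
    Real.norm_of_nonneg hL.le] at hw
  linear_combination hz + hw - L⁻¹ * hΔ + ‖Δ‖ ^ 2 * hL'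

lemma ConvexOn.le_add_inner_gradient_add_norm_sq (hL : 0 < L) {s : ℝ} (hs : 0 < s)
    (hconv : ConvexOn ℝ univ f) (hf : ∀ z, HasGradientAt f (f' z) z)
    (hlip : ∀ z w, ‖f' z - f' w‖ ≤ L * ‖z - w‖) (p u y : E) :
    f p ≤ f u + ⟪f' y, p - u⟫_ℝ + L / (4 * s) * ‖(p - u) - s • (y - p)‖ ^ 2 := by
  have interp := hconv.add_inner_add_norm_sq_gradient_le hL hf hlip
  set d := f' p - f' y
  have direct : f p - f u - ⟪f' y, p - u⟫_ℝ ≤ ⟪d, p - u⟫_ℝ - ‖f' p - f' u‖ ^ 2 / (2 * L) := by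
    have h := interp p u
    rw [← neg_sub p u, inner_neg_right, norm_sub_rev] at h
    rw [inner_sub_left]
    linear_combination h
  have via_y : f p - f u - ⟪f' y, p - u⟫_ℝ
      ≤ -⟪d, y - p⟫_ℝ - (‖d‖ ^ 2 + ‖f' y - f' u‖ ^ 2) / (2 * L) := by
    have h₁ := interp p y
    have h₂ := interp y u
    rw [show u - y = -((p - u) + (y - p)) by abel, inner_neg_right, inner_add_right] at h₂
    rw [norm_sub_rev] at h₁ h₂
    rw [inner_sub_left]
    linear_combination h₁ + h₂
  set α := 1 / (1 + s) with hα_def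
  set γ := s / (1 + s) with hγ_def
  have hα : 0 ≤ α := by positivity
  have hγ : 0 < γ := by positivity
  have hαγ : α + γ = 1 := by rw [hα_def, hγ_def]; field_simp
  have hκ : 0 < γ * (1 + α) / L := by positivity
  have hc : α • (p - u) - γ • (y - p) = α • ((p - u) - s • (y - p)) := by
    rw [hα_def, hγ_def]; module
  have hcoef : 1 / (2 * (γ * (1 + α) / L)) * α ^ 2 = L / (2 * s * (2 + s)) := by
    rw [hα_def, hγ_def]; field_simp; ring
  have : f p - f u - ⟪f' y, p - u⟫_ℝ ≤ L / (4 * s) * ‖(p - u) - s • (y - p)‖ ^ 2 :=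
    calc f p - f u - ⟪f' y, p - u⟫_ℝ
        ≤ α * (⟪d, p - u⟫_ℝ - ‖f' p - f' u‖ ^ 2 / (2 * L))
          + γ * (-⟪d, y - p⟫_ℝ - (‖d‖ ^ 2 + ‖f' y - f' u‖ ^ 2) / (2 * L)) := by
          linear_combination α * direct + γ * via_y - (f p - f u - ⟪f' y, p - u⟫_ℝ) * hαγ
      _ = ⟪d, α • (p - u) - γ • (y - p)⟫_ℝ
          - (γ * ‖d‖ ^ 2 + (α * ‖f' p - f' u‖ ^ 2 + γ * ‖f' y - f' u‖ ^ 2)) / (2 * L) := by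
          rw [inner_sub_right d (α • (p - u)), real_inner_smul_right, real_inner_smul_right]; ring
      _ ≤ ⟪d, α • (p - u) - γ • (y - p)⟫_ℝ - (γ * ‖d‖ ^ 2 + α * γ * ‖d‖ ^ 2) / (2 * L) := by
          have := mul_mul_norm_sub_sq_le hαγ (f' p - f' u) (f' y - f' u)
          rw [sub_sub_sub_cancel_right] at this
          gcongr
      _ = ⟪d, α • (p - u) - γ • (y - p)⟫_ℝ - γ * (1 + α) / L / 2 * ‖d‖ ^ 2 := by ring
      _ ≤ 1 / (2 * (γ * (1 + α) / L)) * ‖α • (p - u) - γ • (y - p)‖ ^ 2 := by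
          linarith [real_inner_le_mul_norm_sq_add hκ d (α • (p - u) - γ • (y - p))]
      _ = L / (2 * s * (2 + s)) * ‖(p - u) - s • (y - p)‖ ^ 2 := by
          rw [hc, norm_smul, mul_pow, Real.norm_of_nonneg hα, ← hcoef]; ring
      _ ≤ L / (4 * s) * ‖(p - u) - s • (y - p)‖ ^ 2 := by
          gcongr L / ?_ * _
          nlinarith
  linarith

end SmoothConvex

section Prox

variable {n : ℕ} {g : Euc n → EReal} {P : ℝ → Euc n → Euc n} {α : ℝ}

lemma IsProx.apply_ne_top (hP : IsProx g P) (hα : 0 < α) (x : Euc n) {z : Euc n}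
    (hz : g z ≠ ⊤) : g (P α x) ≠ ⊤ := by
  intro htop
  have h := (hP α hα x (P α x)).1 rfl z
  rw [htop, EReal.top_add_coe, top_le_iff] at h
  exact EReal.add_ne_top hz (EReal.coe_ne_top _) h

lemma IsProx.toReal_add_inner_le_add_mul (hP : IsProx g P) (hbot : ∀ x, g x ≠ ⊥)
    (hconv : ConvexEReal g) (hα : 0 < α) (x : Euc n) {z : Euc n} (hz : g z ≠ ⊤)
    {t : ℝ} (ht : t ∈ Ioc (0 : ℝ) 1) :
    (g (P α x)).toReal + α⁻¹ * ⟪x - P α x, z - P α x⟫_ℝ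
      ≤ (g z).toReal + t * ((2 * α)⁻¹ * ‖z - P α x‖ ^ 2) := by
  set p := P α x
  have hp := (EReal.coe_toReal (hP.apply_ne_top hα x hz) (hbot p)).symm
  have hz' := (EReal.coe_toReal hz (hbot z)).symm
  have hmin := (hP α hα x p).1 rfl ((1 - t) • p + t • z)
  have hcvx := hconv p z (1 - t) t (by linarith [ht.2]) ht.1.le (by ring)
  rw [hp, hz'] at hcvx
  rw [hp] at hmin
  have hreal : (g p).toReal + 1 / (2 * α) * ‖x - p‖ ^ 2
      ≤ (1 - t) * (g p).toReal + t * (g z).toReal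
        + 1 / (2 * α) * ‖x - ((1 - t) • p + t • z)‖ ^ 2 := by
    have := hmin.trans (add_le_add hcvx le_rfl)
    exact_mod_cast this
  have hexp : ‖x - ((1 - t) • p + t • z)‖ ^ 2
      = ‖x - p‖ ^ 2 - 2 * (t * ⟪x - p, z - p⟫_ℝ) + t ^ 2 * ‖z - p‖ ^ 2 := by
    rw [show x - ((1 - t) • p + t • z) = (x - p) - t • (z - p) by module, norm_sub_sq_real,
      real_inner_smul_right, norm_smul, mul_pow, Real.norm_of_nonneg ht.1.le]
  rw [hexp] at hreal
  refine le_of_mul_le_mul_left ?_ ht.1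
  linear_combination hreal

lemma IsProx.toReal_add_inner_le (hP : IsProx g P) (hbot : ∀ x, g x ≠ ⊥)
    (hconv : ConvexEReal g) (hα : 0 < α) (x : Euc n) {z : Euc n} (hz : g z ≠ ⊤) :
    (g (P α x)).toReal + α⁻¹ * ⟪x - P α x, z - P α x⟫_ℝ ≤ (g z).toReal := by
  have hlim : Tendsto (fun t : ℝ => (g z).toReal + t * ((2 * α)⁻¹ * ‖z - P α x‖ ^ 2))
      (𝓝[>] 0) (𝓝 (g z).toReal) := by
    have hcont : Continuous fun t : ℝ => (g z).toReal + t * ((2 * α)⁻¹ * ‖z - P α x‖ ^ 2) := by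
      fun_prop
    exact (hcont.tendsto' 0 _ (by simp)).mono_left nhdsWithin_le_nhds
  refine ge_of_tendsto hlim ?_
  filter_upwards [Ioc_mem_nhdsGT zero_lt_one] with t ht
  exact hP.toReal_add_inner_le_add_mul hbot hconv hα x hz ht

end Prox

lemma sufficient_decrease_of_prox_step {n : ℕ} {f h : Euc n → ℝ} {f' : Euc n → Euc n}
    {g : Euc n → EReal} {P : ℝ → Euc n → Euc n} {L lam mu : ℝ} (hL : 0 < L) (hlam : 0 < lam)
    (hmu : mu = 2 / (2 * lam + L)) (hfconv : ConvexOn ℝ univ f)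
    (hf : ∀ z, HasGradientAt f (f' z) z) (hlip : ∀ z w, ‖f' z - f' w‖ ≤ L * ‖z - w‖)
    (hbot : ∀ x, g x ≠ ⊥) (hgconv : ConvexEReal g) (hP : IsProx g P)
    {u y η p : Euc n} (hη : η ∈ SubdiffR h u) (hu : g u ≠ ⊤)
    (hp : p = P mu ((1 - mu * lam) • y - mu • f' y + (mu * lam) • u + mu • η)) :
    f p - h p + (g p).toReal + lam / 2 * ‖u - p‖ ^ 2
      ≤ f u - h u + (g u).toReal + L ^ 2 / (8 * lam) * ‖y - p‖ ^ 2 := by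
  set w := (1 - mu * lam) • y - mu • f' y + (mu * lam) • u + mu • η
  set s := L / (2 * lam) with hs_def
  set q := (p - u) - s • (y - p)
  have hmu_pos : 0 < mu := by rw [hmu]; positivity
  have hprox := hP.toReal_add_inner_le hbot hgconv hmu_pos w hu
  rw [← hp] at hprox
  have hsub : mu⁻¹ • (w - p) = η - f' y - lam • q := by
    simp only [w, q, hs_def, hmu]; match_scalars <;> field_simp <;> ring
  have hf3 := hfconv.le_add_inner_gradient_add_norm_sq hL (by positivity : 0 < s) hf hlip p u y
  have hLs : L / (4 * s) = lam / 2 := by rw [hs_def]; field_simp; ring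
  have hq : ‖q - (p - u)‖ ^ 2 = s ^ 2 * ‖y - p‖ ^ 2 := by
    rw [show q - (p - u) = -(s • (y - p)) by simp [q], norm_neg, norm_smul, mul_pow,
      Real.norm_eq_abs, sq_abs]
  have hs_sq : lam / 2 * s ^ 2 = L ^ 2 / (8 * lam) := by rw [hs_def]; field_simp; ring
  rw [← real_inner_smul_left, hsub, ← neg_sub p u, inner_neg_right, inner_sub_left,
    inner_sub_left, real_inner_smul_left] at hprox
  rw [hLs] at hf3
  have := norm_sub_sq_real q (p - u)
  rw [norm_sub_rev u p]
  linear_combination hprox + hη p + hf3 - lam / 2 * this + lam / 2 * hq + ‖y - p‖ ^ 2 * hs_sq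

namespace IsCDCA

variable {n : ℕ} {f h : Euc n → ℝ} {f' : Euc n → Euc n} {g : Euc n → EReal}
  {P : ℝ → Euc n → Euc n} {L lam mu δ : ℝ} {x : ℕ → Euc n}

lemma ne_top (hx : IsCDCA f' h P lam mu δ x) (hP : IsProx g P) (hmu : 0 < mu)
    (hx0 : g (x 1) ≠ ⊤) (k : ℕ) : g (x (k + 1)) ≠ ⊤ := by
  induction k with
  | zero => exact hx0
  | succ k ih =>
    obtain ⟨η, -, y, hupd, -⟩ := hx k
    rw [hupd]
    exact hP.apply_ne_top hmu _ ih

lemma sufficient_decrease (hx : IsCDCA f' h P lam mu δ x) (hL : 0 < L) (hlam : 0 < lam)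
    (hmu : mu = 2 / (2 * lam + L)) (hfconv : ConvexOn ℝ univ f)
    (hf : ∀ z, HasGradientAt f (f' z) z) (hlip : ∀ z w, ‖f' z - f' w‖ ≤ L * ‖z - w‖)
    (hbot : ∀ x, g x ≠ ⊥) (hgconv : ConvexEReal g) (hP : IsProx g P) {k : ℕ}
    (hk : g (x (k + 1)) ≠ ⊤) :
    f (x (k + 2)) - h (x (k + 2)) + (g (x (k + 2))).toReal
        + lam / 2 * ‖x (k + 1) - x (k + 2)‖ ^ 2
      ≤ f (x (k + 1)) - h (x (k + 1)) + (g (x (k + 1))).toReal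
        + L ^ 2 * δ ^ 2 / (8 * lam) * ‖x (k + 1) - x k‖ ^ 2 := by
  obtain ⟨η, hη, y, hupd, hclose⟩ := hx k
  have hstep :=
    sufficient_decrease_of_prox_step hL hlam hmu hfconv hf hlip hbot hgconv hP hη hk hupd
  have hinexact : L ^ 2 / (8 * lam) * ‖y - x (k + 2)‖ ^ 2
      ≤ L ^ 2 * δ ^ 2 / (8 * lam) * ‖x (k + 1) - x k‖ ^ 2 := by
    rw [norm_sub_rev y, norm_sub_rev (x (k + 1))]
    calc L ^ 2 / (8 * lam) * ‖x (k + 2) - y‖ ^ 2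
        ≤ L ^ 2 / (8 * lam) * (δ * ‖x k - x (k + 1)‖) ^ 2 := by gcongr
      _ = L ^ 2 * δ ^ 2 / (8 * lam) * ‖x k - x (k + 1)‖ ^ 2 := by ring
  linarith

end IsCDCA

theorem stmt5_general {n : ℕ}
    (f : Euc n → ℝ) (f' : Euc n → Euc n) (Lf : ℝ) (hLf : 0 < Lf)
    (hfconv : ConvexOn ℝ Set.univ f)
    (hfgrad : ∀ z, HasGradientAt f (f' z) z)
    (hflip : ∀ z w, ‖f' z - f' w‖ ≤ Lf * ‖z - w‖)
    (g : Euc n → EReal) (hgproper : ProperE g) (hgconv : ConvexEReal g)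
    (h : Euc n → ℝ)
    (F : Euc n → EReal) (hF : ∀ z, F z = ((f z - h z : ℝ) : EReal) + g z)
    (P : ℝ → Euc n → Euc n) (hP : IsProx g P)
    (lam δ mu tau : ℝ) (hlam : 0 < lam) (hδ : δ ∈ Set.Ioo 0 (2*lam/Lf))
    (hmu : mu = 2/(2*lam + Lf)) (htau : tau = Lf^2 * δ^2 / (8*lam))
    (EE : Euc n → Euc n → EReal) (hEE : ∀ a b, EE a b = F a + ((tau * ‖a - b‖^2 : ℝ) : EReal))
    (x : ℕ → Euc n) (hx : IsCDCA f' h P lam mu δ x) (hx0 : g (x 1) ≠ ⊤) :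
    tau < lam/2 ∧
      (∀ k : ℕ,
        EE (x (k+2)) (x (k+1)) + (((lam/2 - tau) * ‖x (k+1) - x (k+2)‖^2 : ℝ) : EReal) ≤
          EE (x (k+1)) (x k)) ∧
      (∀ k : ℕ, EE (x (k+2)) (x (k+1)) ≤ EE (x (k+1)) (x k)) := by
  obtain ⟨hδ0, hδ2⟩ := hδ
  have hmu_pos : 0 < mu := by rw [hmu]; positivity
  have htau_lt : tau < lam / 2 := by
    have : Lf * δ < 2 * lam := by rwa [lt_div_iff₀ hLf, mul_comm] at hδ2
    rw [htau, div_lt_iff₀ (by positivity)]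
    nlinarith [mul_pos hLf hδ0]
  have hfin := hx.ne_top hP hmu_pos hx0
  have hEE_real : ∀ k, EE (x (k + 1)) (x k) = ((f (x (k + 1)) - h (x (k + 1))
      + (g (x (k + 1))).toReal + tau * ‖x (k + 1) - x k‖ ^ 2 : ℝ) : EReal) := by
    intro k
    rw [hEE, hF]
    conv_lhs => rw [← EReal.coe_toReal (hfin k) (hgproper.1 _)]
    norm_cast
  have hdesc : ∀ k : ℕ, EE (x (k+2)) (x (k+1))
      + (((lam/2 - tau) * ‖x (k+1) - x (k+2)‖^2 : ℝ) : EReal) ≤ EE (x (k+1)) (x k) := by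
    intro k
    have :=
      hx.sufficient_decrease hLf hlam hmu hfconv hfgrad hflip hgproper.1 hgconv hP (hfin k)
    rw [hEE_real (k + 1), hEE_real k, ← EReal.coe_add, EReal.coe_le_coe_iff,
      norm_sub_rev (x (k + 2)), htau]
    linarith
  refine ⟨htau_lt, hdesc, fun k => le_trans ?_ (hdesc k)⟩
  exact le_add_of_nonneg_right (EReal.coe_nonneg.2 (mul_nonneg (by linarith) (sq_nonneg _)))

/-- For a cDCA sequence with `x⁰ ∈ dom g`, for every `k ≥ 0`,
`E(x^{k+1}, x^k) + (λ/2 - τ)‖x^k - x^{k+1}‖² ≤ E(x^k, x^{k-1})`; in particular, since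
`τ = L_f²δ²/(8λ) < λ/2`, the sequence `(E(x^k, x^{k-1}))_{k ≥ 0}` is nonincreasing.
(Here `x 0 = x⁻¹`, `x (k+1) = xᵏ`, and `E(a, b) = F(a) + τ‖a - b‖²`.) -/
theorem stmt5 {n : ℕ}
    (f : Euc n → ℝ) (f' : Euc n → Euc n) (Lf : ℝ) (hLf : 0 < Lf)
    (hfconv : ConvexOn ℝ Set.univ f)
    (hfgrad : ∀ z, HasGradientAt f (f' z) z)
    (hflip : ∀ z w, ‖f' z - f' w‖ ≤ Lf * ‖z - w‖)
    (g : Euc n → EReal) (hgproper : ProperE g) (hgconv : ConvexEReal g)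
    (hglsc : LowerSemicontinuous g)
    (h : Euc n → ℝ) (hhconv : ConvexOn ℝ Set.univ h)
    (F : Euc n → EReal) (hF : ∀ z, F z = ((f z - h z : ℝ) : EReal) + g z)
    (P : ℝ → Euc n → Euc n) (hP : IsProx g P)
    (lam δ mu tau : ℝ) (hlam : 0 < lam) (hδ : δ ∈ Set.Ioo 0 (2*lam/Lf))
    (hmu : mu = 2/(2*lam + Lf)) (htau : tau = Lf^2 * δ^2 / (8*lam))
    (EE : Euc n → Euc n → EReal) (hEE : ∀ a b, EE a b = F a + ((tau * ‖a - b‖^2 : ℝ) : EReal))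
    (x : ℕ → Euc n) (hx : IsCDCA f' h P lam mu δ x) (hx0 : g (x 1) ≠ ⊤) :
    tau < lam/2 ∧
      (∀ k : ℕ,
        EE (x (k+2)) (x (k+1)) + (((lam/2 - tau) * ‖x (k+1) - x (k+2)‖^2 : ℝ) : EReal) ≤
          EE (x (k+1)) (x k)) ∧
      (∀ k : ℕ, EE (x (k+2)) (x (k+1)) ≤ EE (x (k+1)) (x k)) :=
  stmt5_general f f' Lf hLf hfconv hfgrad hflip g hgproper hgconv h F hF P hP lam δ mu tau hlam hδ
    hmu htau EE hEE x hx hx0
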